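/- Assume the Common Givens: P_i is a preference order on C consistent with Q; the query is the pair (c_j,c_k) with P_i(c_j,c_k); and neither (c_j,c_k) nor (c_k,c_j) belongs to Q. Let P' ∈ μ(P_i). Then the relative order that P' induces on the set [∞, P', c_k] (the set consisting of c_k and all candidates above c_k in P') coincides with the relative order P_i induces on that set, and the relative order that P' induces on the set [c_j, P', −∞] (the set consisting of c_j and all candidates below c_j in P') coincides with the relative order P_i induces on that set. -/

import Mathlib

/-- A preference order: a strict total order on candidates. -/
def IsPref {C : Type*} (P : C → C → Prop) : Prop :=
  (∀ a b : C, a ≠ b → P a b ∨ P b a) ∧ (∀ a : C, ¬ P a a) ∧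
    ∀ a b c : C, P a b → P b c → P a c

/-- The (closed) segment `[c, P, c']` of candidates between `c` and `c'`. -/
def seg {C : Type*} (P : C → C → Prop) (c c' : C) : Set C :=
  {d : C | (d = c ∨ P c d) ∧ (d = c' ∨ P d c')}

/-- `Q` is a strict partial order (consistent, transitively closed reported preferences). -/
def IsSPO {C : Type*} (Q : C → C → Prop) : Prop :=
  (∀ a : C, ¬ Q a a) ∧ ∀ a b c : C, Q a b → Q b c → Q a c

/-- `P` is consistent with (extends) the reported preferences `Q`, written `P ⊨ Q`. -/
def Extends {C : Type*} (P Q : C → C → Prop) : Prop := ∀ a b : C, Q a b → P a b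

/-- The swap distance between two preference orders: the number of (unordered) pairs of
candidates ordered differently, counted here as ordered pairs `(a, b)` with
`P a b` and `P' b a`. -/
noncomputable def dswap {C : Type*} [Fintype C] (P P' : C → C → Prop) : ℕ :=
  Set.ncard {p : C × C | P p.1 p.2 ∧ P' p.2 p.1}

/-- `P` is a preference order consistent with the transitive closure of `Q ∪ {(ck, cj)}`
(for a transitive total order this is the same as extending `Q` and putting `ck` above `cj`). -/
def Feasible {C : Type*} (Q : C → C → Prop) (cj ck : C) (P : C → C → Prop) : Prop :=
  IsPref P ∧ Extends P Q ∧ P ck cj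

/-- `P ∈ μ(Pi)`: among all preference orders consistent with the transitive closure of
`Q ∪ {(ck, cj)}`, `P` minimizes the swap distance to `Pi`. -/
def InMu {C : Type*} [Fintype C] (Q : C → C → Prop) (cj ck : C)
    (Pi P : C → C → Prop) : Prop :=
  Feasible Q cj ck P ∧ ∀ R : C → C → Prop, Feasible Q cj ck R → dswap Pi P ≤ dswap Pi R

/-!
A minimizer `P'` agrees with `Pi` on every `P'`-adjacent pair other than `(ck, cj)`: reversing an
adjacent pair on which they disagree keeps consistency with `Q` and `ck` above `cj`, and lowers
the swap distance to `Pi` by one. The segments `[∞, P', ck]` and `[cj, P', −∞]` are convex in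
`P'` and contain only one of `ck`, `cj`, so any two of their members are joined by a chain of
such adjacent pairs inside the segment, and transitivity of `Pi` finishes the argument.
-/

section

variable {C : Type*}

lemma IsPref.asymm {P : C → C → Prop} (hP : IsPref P) {a b : C} (hab : P a b) : ¬ P b a :=
  fun hba => hP.2.1 a (hP.2.2 a b a hab hba)

lemma IsPref.ne {P : C → C → Prop} (hP : IsPref P) {a b : C} (hab : P a b) : a ≠ b := by
  rintro rfl
  exact hP.2.1 a hab

lemma IsPref.iff_of_imp {P R : C → C → Prop} (hP : IsPref P) (hR : IsPref R) {S : Set C}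
    (h : ∀ a ∈ S, ∀ b ∈ S, P a b → R a b) : ∀ a ∈ S, ∀ b ∈ S, P a b ↔ R a b := by
  refine fun a ha b hb => ⟨h a ha b hb, fun hab => ?_⟩
  rcases hP.1 a b (hR.ne hab) with hab' | hba
  · exact hab'
  · exact absurd (h b hb a ha hba) (hR.asymm hab)

def RelCovBy (P : C → C → Prop) (x y : C) : Prop := P x y ∧ ∀ z, P x z → ¬ P z y

def swapPair (P : C → C → Prop) (x y : C) (a b : C) : Prop :=
  (P a b ∧ ¬(a = x ∧ b = y)) ∨ (a = y ∧ b = x)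

def RelOrdConnected (P : C → C → Prop) (S : Set C) : Prop :=
  ∀ a ∈ S, ∀ b ∈ S, ∀ z, P a z → P z b → z ∈ S

lemma IsPref.swapPair {P : C → C → Prop} (hP : IsPref P) {x y : C} (hxy : RelCovBy P x y) :
    IsPref (swapPair P x y) := by
  obtain ⟨hxy, hcov⟩ := hxy
  have hne := hP.ne hxy
  refine ⟨fun a b hab => ?_, ?_, ?_⟩
  · by_cases hab' : a = x ∧ b = y
    · exact Or.inr (Or.inr ⟨hab'.2, hab'.1⟩)
    by_cases hba' : b = x ∧ a = y
    · exact Or.inl (Or.inr ⟨hba'.2, hba'.1⟩)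
    rcases hP.1 a b hab with h | h
    · exact Or.inl (Or.inl ⟨h, hab'⟩)
    · exact Or.inr (Or.inl ⟨h, hba'⟩)
  · rintro a (⟨h, -⟩ | ⟨rfl, rfl⟩)
    · exact hP.2.1 a h
    · exact hne rfl
  · rintro a b c (⟨hab, hab'⟩ | ⟨hay, hbx⟩) (⟨hbc, hbc'⟩ | ⟨hby, hcx⟩)
    · refine Or.inl ⟨hP.2.2 a b c hab hbc, ?_⟩
      rintro ⟨rfl, rfl⟩
      exact hcov b hab hbc
    · -- `a` lies above `y`, hence above `x`, since nothing lies strictly between `x` and `y`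
      subst hby hcx
      have hax : a ≠ c := fun h => hab' ⟨h, rfl⟩
      refine Or.inl ⟨(hP.1 a c hax).resolve_right fun hca => hcov a hca hab, ?_⟩
      rintro ⟨-, rfl⟩
      exact hne rfl
    · subst hay hbx
      have hcy : c ≠ a := fun h => hbc' ⟨rfl, h⟩
      refine Or.inl ⟨(hP.1 a c hcy.symm).resolve_right fun hca => hcov c hbc hca, ?_⟩
      rintro ⟨rfl, -⟩
      exact hne rfl
    · exact absurd (hbx.symm.trans hby) hne

lemma dswap_swapPair_lt [Fintype C] {Pi P : C → C → Prop} (hPi : IsPref Pi) {x y : C}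
    (hxy : P x y) (hyx : Pi y x) : dswap Pi (swapPair P x y) < dswap Pi P := by
  have hset : {p : C × C | Pi p.1 p.2 ∧ swapPair P x y p.2 p.1} =
      {p : C × C | Pi p.1 p.2 ∧ P p.2 p.1} \ {(y, x)} := by
    ext ⟨a, b⟩
    simp only [swapPair, Set.mem_ofPred_eq, Set.mem_sdiff, Set.mem_singleton_iff, Prod.mk.injEq]
    constructor
    · rintro ⟨hab, ⟨hba, hne⟩ | ⟨rfl, rfl⟩⟩
      · exact ⟨⟨hab, hba⟩, fun h => hne h.symm⟩
      · exact absurd hab (hPi.asymm hyx)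
    · rintro ⟨⟨hab, hba⟩, hne⟩
      exact ⟨hab, Or.inl ⟨hba, fun h => hne h.symm⟩⟩
  unfold dswap
  rw [hset]
  exact Set.ncard_sdiff_singleton_lt_of_mem ⟨hyx, hxy⟩

/-- Reversing a covering pair other than `(ck, cj)` on which `P` and `Pi` disagree would stay
feasible and come closer to `Pi`. -/
lemma InMu.rel_of_relCovBy [Fintype C] {Q : C → C → Prop} {cj ck : C} {Pi P : C → C → Prop}
    (hmu : InMu Q cj ck Pi P) (hPi : IsPref Pi) (hPiQ : Extends Pi Q) {x y : C}
    (hxy : RelCovBy P x y) (hkj : ¬(x = ck ∧ y = cj)) : Pi x y := by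
  obtain ⟨⟨hP, hPQ, hPkj⟩, hmin⟩ := hmu
  by_contra hPixy
  have hyx : Pi y x := (hPi.1 x y (hP.ne hxy.1)).resolve_left hPixy
  have hfeas : Feasible Q cj ck (swapPair P x y) := by
    refine ⟨hP.swapPair hxy, fun a b hab => Or.inl ⟨hPQ a b hab, ?_⟩, Or.inl ⟨hPkj, ?_⟩⟩
    · rintro ⟨rfl, rfl⟩
      exact hPi.asymm hyx (hPiQ a b hab)
    · exact fun h => hkj ⟨h.1.symm, h.2.symm⟩
  exact absurd (hmin _ hfeas) (not_le.mpr (dswap_swapPair_lt hPi hxy.1 hyx))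

lemma rel_of_forall_relCovBy [Finite C] {P R : C → C → Prop} (hP : IsPref P)
    (hR : ∀ a b c, R a b → R b c → R a c) {S : Set C} (hS : RelOrdConnected P S)
    (hcov : ∀ x ∈ S, ∀ y ∈ S, RelCovBy P x y → R x y) :
    ∀ a ∈ S, ∀ b ∈ S, P a b → R a b := by
  suffices h : ∀ n, ∀ a ∈ S, ∀ b ∈ S, P a b → {z | P a z ∧ P z b}.ncard = n → R a b from
    fun a ha b hb hab => h _ a ha b hb hab rfl
  intro n
  induction n using Nat.strong_induction_on with
  | _ n ih =>
    intro a ha b hb hab hn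
    by_cases hab' : RelCovBy P a b
    · exact hcov a ha b hb hab'
    obtain ⟨z, haz, hzb⟩ : ∃ z, P a z ∧ P z b := by
      simpa [RelCovBy, hab] using hab'
    have hz := hS a ha b hb z haz hzb
    have hlt₁ : {w | P a w ∧ P w z}.ncard < n := hn ▸ Set.ncard_lt_ncard
      ⟨fun w hw => ⟨hw.1, hP.2.2 w z b hw.2 hzb⟩, fun h => hP.2.1 z (h ⟨haz, hzb⟩).2⟩
    have hlt₂ : {w | P z w ∧ P w b}.ncard < n := hn ▸ Set.ncard_lt_ncard
      ⟨fun w hw => ⟨hP.2.2 a z w haz hw.1, hw.2⟩, fun h => hP.2.1 z (h ⟨haz, hzb⟩).1⟩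
    exact hR a z b (ih _ hlt₁ a ha z hz haz rfl) (ih _ hlt₂ z hz b hb hzb rfl)

lemma InMu.iff_of_relOrdConnected [Fintype C] {Q : C → C → Prop} {cj ck : C}
    {Pi P : C → C → Prop} (hmu : InMu Q cj ck Pi P) (hPi : IsPref Pi) (hPiQ : Extends Pi Q)
    {S : Set C} (hS : RelOrdConnected P S) (hkj : ck ∈ S → cj ∉ S) :
    ∀ a ∈ S, ∀ b ∈ S, P a b ↔ Pi a b := by
  have hP := hmu.1.1
  refine hP.iff_of_imp hPi (rel_of_forall_relCovBy hP hPi.2.2 hS fun x hx y hy hxy => ?_)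
  exact hmu.rel_of_relCovBy hPi hPiQ hxy fun ⟨hxk, hyj⟩ => hkj (hxk ▸ hx) (hyj ▸ hy)

lemma relOrdConnected_above {P : C → C → Prop} (hP : IsPref P) (c : C) :
    RelOrdConnected P {d | d = c ∨ P d c} := by
  rintro a - b (rfl | hb) z - hzb
  · exact Or.inr hzb
  · exact Or.inr (hP.2.2 z b c hzb hb)

lemma relOrdConnected_below {P : C → C → Prop} (hP : IsPref P) (c : C) :
    RelOrdConnected P {d | d = c ∨ P c d} := by
  rintro a (rfl | ha) b - z haz -
  · exact Or.inr haz
  · exact Or.inr (hP.2.2 c a z ha haz)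

end

theorem statement8 {C : Type*} [Fintype C]
    (Q : C → C → Prop)
    (Pi : C → C → Prop) (hPi : IsPref Pi) (hPiQ : Extends Pi Q)
    (cj ck : C)
    (P' : C → C → Prop) (hmu : InMu Q cj ck Pi P') :
    (∀ a b : C, (a = ck ∨ P' a ck) → (b = ck ∨ P' b ck) → (P' a b ↔ Pi a b)) ∧
      ∀ a b : C, (a = cj ∨ P' cj a) → (b = cj ∨ P' cj b) → (P' a b ↔ Pi a b) := by
  have hP' := hmu.1.1
  have hkj := hmu.1.2.2
  constructor
  · have hS := hmu.iff_of_relOrdConnected hPi hPiQ (relOrdConnected_above hP' ck) <| by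
      rintro - (hjk | hjk)
      · exact hP'.ne hkj hjk.symm
      · exact hP'.asymm hkj hjk
    exact fun a b ha hb => hS a ha b hb
  · have hS := hmu.iff_of_relOrdConnected hPi hPiQ (relOrdConnected_below hP' cj) <| by
      rintro (hjk | hjk) -
      · exact hP'.ne hkj hjk
      · exact hP'.asymm hkj hjk
    exact fun a b ha hb => hS a ha b hb
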